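/- arXiv:1004.3618 — 2 statements merged into one kernel-verified Lean document; each statement's English description precedes it below -/
import Mathlib

section
/- Let H be a subnormal subgroup of finite index in a group G. Then the index of the core H_G = ⋂_{g∈G} g⁻¹Hg in G divides [G:H]^{[G:N_G(H)]}. In particular, if [G:H] is a power of a prime p, then [G:H_G] is also a power of p. -/
def Subgroup.IsSubnormal' {G : Type*} [Group G] (H : Subgroup G) : Prop :=
  ∃ n : ℕ, ∃ c : ℕ → Subgroup G, c 0 = H ∧ c n = ⊤ ∧
    ∀ i < n, c i ≤ c (i + 1) ∧ ((c i).subgroupOf (c (i + 1))).Normal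

/-!
For a subnormal subgroup `H`, the relative index `[K : H ∩ K]` divides `[G : H]` for every
subgroup `K`: this is trivial for `H = G` and passes from `M` to `H ⊴ M`, since
`[K : H ∩ K] = [M ∩ K : H ∩ K] · [K : M ∩ K]` and normality of `H` in `M` gives
`[M ∩ K : H ∩ K] ∣ [M : H]`. The core is the intersection of the `[G : N_G(H)]` conjugates of `H`,
each of which inherits this property, so intersecting them one at a time multiplies the index by
a divisor of `[G : H]` at each step.
-/

open scoped Pointwise

namespace Subgroup

variable {G : Type*} [Group G]

theorem IsSubnormal'.isSubnormal {H : Subgroup G} (hH : H.IsSubnormal') : H.IsSubnormal := by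
  obtain ⟨n, c, rfl, htop, hchain⟩ := hH
  induction n generalizing c with
  | zero => exact htop ▸ IsSubnormal.top
  | succ n ih =>
    obtain ⟨hle, hnormal⟩ := hchain 0 n.succ_pos
    exact .step _ _ hle (ih (fun i => c (i + 1)) htop fun i hi => hchain (i + 1) (by omega))
      hnormal

theorem relIndex_dvd_index_of_normal_subgroupOf {H M : Subgroup G} (hHM : H ≤ M)
    [(H.subgroupOf M).Normal] (hM : ∀ K : Subgroup G, M.relIndex K ∣ M.index)
    (K : Subgroup G) : H.relIndex K ∣ H.index := by
  have hsplit : H.relIndex (M ⊓ K) * M.relIndex K = H.relIndex K := by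
    rw [relIndex_inf_mul_relIndex, inf_eq_left.mpr hHM]
  have hnormal : H.relIndex (M ⊓ K) ∣ H.relIndex M := by
    rw [← relIndex_subgroupOf inf_le_left]
    exact relIndex_dvd_index_of_normal _ _
  calc H.relIndex K = H.relIndex (M ⊓ K) * M.relIndex K := hsplit.symm
    _ ∣ H.relIndex M * M.index := mul_dvd_mul hnormal (hM K)
    _ = H.index := relIndex_mul_index hHM

theorem IsSubnormal.relIndex_dvd_index {H : Subgroup G} (hH : H.IsSubnormal) (K : Subgroup G) :
    H.relIndex K ∣ H.index := by
  induction hH generalizing K with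
  | top => simp
  | step H M hHM _ hnormal ih =>
    exact relIndex_dvd_index_of_normal_subgroupOf hHM ih K

theorem index_sInf_dvd_pow {S : Set (Subgroup G)} (hS : S.Finite) {d : ℕ}
    (hd : ∀ H ∈ S, ∀ K : Subgroup G, H.relIndex K ∣ d) : (sInf S).index ∣ d ^ S.ncard := by
  induction S, hS using Set.Finite.induction_on with
  | empty => simp
  | @insert H S hHS hS ih =>
    rw [sInf_insert, Set.ncard_insert_of_notMem hHS hS, pow_succ',
      ← relIndex_mul_index inf_le_right, inf_relIndex_right]
    exact mul_dvd_mul (hd H (S.mem_insert H) _)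
      (ih fun H' hH' => hd H' (Set.mem_insert_of_mem _ hH'))

theorem stabilizer_conjAct_eq_comap_normalizer (H : Subgroup G) :
    MulAction.stabilizer (ConjAct G) H
      = (normalizer (H : Set G)).comap (G := ConjAct G) ConjAct.ofConjAct.toMonoidHom := by
  ext g
  rw [MulAction.mem_stabilizer_iff, mem_comap, ← conjAct_pointwise_smul_iff]
  rfl

theorem index_normalizer_eq_ncard_orbit_conjAct (H : Subgroup G) :
    (normalizer (H : Set G)).index = (MulAction.orbit (ConjAct G) H).ncard := by
  rw [← MulAction.index_stabilizer, stabilizer_conjAct_eq_comap_normalizer,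
    index_comap_of_surjective _ ConjAct.ofConjAct.surjective]

theorem relIndex_conjAct_smul_dvd_index {H : Subgroup G} (hH : H.IsSubnormal) (g : ConjAct G)
    (K : Subgroup G) : (g • H).relIndex K ∣ H.index := by
  rw [← smul_inv_smul g K, relIndex_pointwise_smul]
  exact hH.relIndex_dvd_index _

end Subgroup

open Subgroup in
theorem core_index_dvd (G : Type*) [Group G] (H : Subgroup G)
    (hsub : H.IsSubnormal') (hfin : H.FiniteIndex) :
    (⨅ g : G, Subgroup.comap (MulAut.conj g).toMonoidHom H).index
        ∣ H.index ^ (Subgroup.normalizer (H : Set G)).index ∧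
      ∀ p k : ℕ, p.Prime → H.index = p ^ k →
        ∃ l : ℕ, (⨅ g : G, Subgroup.comap (MulAut.conj g).toMonoidHom H).index = p ^ l := by
  have hcore : (⨅ g : G, Subgroup.comap (MulAut.conj g).toMonoidHom H)
      = sInf (MulAction.orbit (ConjAct G) H) :=
    H.normalCore_eq_iInf_comap_conj.symm.trans (H.normalCore_eq_iInf_conjAct.trans sInf_range.symm)
  have horbit : (MulAction.orbit (ConjAct G) H).Finite := by
    refine Set.finite_of_ncard_ne_zero ?_
    rw [← index_normalizer_eq_ncard_orbit_conjAct]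
    exact (finiteIndex_of_le le_normalizer).index_ne_zero
  have hdvd : (⨅ g : G, Subgroup.comap (MulAut.conj g).toMonoidHom H).index
      ∣ H.index ^ (normalizer (H : Set G)).index := by
    rw [hcore, index_normalizer_eq_ncard_orbit_conjAct]
    refine index_sInf_dvd_pow horbit ?_
    rintro _ ⟨g, rfl⟩
    exact relIndex_conjAct_smul_dvd_index hsub.isSubnormal g
  refine ⟨hdvd, fun p k hp hk => ?_⟩
  rw [hk, ← pow_mul] at hdvd
  obtain ⟨l, -, hl⟩ := (Nat.dvd_prime_pow hp).mp hdvd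
  exact ⟨l, hl⟩
end

section
/- Let φ be an automorphism of ℤ^d, p a prime, and suppose the reduction φ̄ of φ modulo p is unipotent on 𝔽_p^d. Then G = ℤ ⋉_φ ℤ^d is residually p. -/
/-- The action of `ℤ` on `ℤ^d` where `1` acts by `φ`. -/
def sdAct (d : ℕ) (φ : (Fin d → ℤ) ≃ₗ[ℤ] (Fin d → ℤ)) :
    Multiplicative ℤ →* MulAut (Multiplicative (Fin d → ℤ)) :=
  zpowersHom _ (AddEquiv.toMultiplicative φ.toAddEquiv)

/-- The mapping torus `ℤ ⋉_φ ℤ^d`. -/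
abbrev MapTorus (d : ℕ) (φ : (Fin d → ℤ) ≃ₗ[ℤ] (Fin d → ℤ)) :=
  Multiplicative (Fin d → ℤ) ⋊[sdAct d φ] Multiplicative ℤ

/-- A group is residually `p` if every nontrivial element is detected by a homomorphism
to a finite `p`-group. -/
def ResiduallyP (p : ℕ) (G : Type*) [Group G] : Prop :=
  ∀ g : G, g ≠ 1 → ∃ (P : Type) (_ : Group P) (_ : Finite P) (f : G →* P),
    IsPGroup p P ∧ f g ≠ 1

/-!
Let `M` be the integer matrix of `φ` and `B` its reduction modulo `p ^ k`. Since `(B - 1) ^ d`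
is divisible by `p` and `p ^ k = 0`, the matrix `B - 1` is nilpotent in a ring where `p` is
nilpotent, and then `(1 + X) ^ p ^ m - 1 ∈ (p, X) ^ (m + 1)` forces `B ^ p ^ m = 1` for some `m`.
So reduction modulo `p ^ k` maps `ℤ ⋉_φ ℤ^d` onto `(ℤ/p^k)^d ⋊ ⟨B⟩`, a finite `p`-group, which
detects every element whose `ℤ^d`-coordinate is not divisible by `p ^ k`. An element with trivial
`ℤ^d`-coordinate is detected by the projection onto `ℤ` followed by `ℤ → ℤ/p^k`.
-/

theorem Ideal.one_add_pow_prime_pow_sub_one_mem_pow {S : Type*} [CommRing S] {p : ℕ}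
    (hp : p.Prime) {I : Ideal S} (hpI : (p : S) ∈ I) {x : S} (hx : x ∈ I) (m : ℕ) :
    (1 + x) ^ p ^ m - 1 ∈ I ^ (m + 1) := by
  induction m with
  | zero => simpa using hx
  | succ m ih =>
    set y := (1 + x) ^ p ^ m - 1
    obtain ⟨r, hr⟩ := exists_add_pow_prime_eq hp 1 y
    have hyp : y ^ p ∈ I ^ (m + 2) :=
      Ideal.pow_le_pow_right (by nlinarith [hp.two_le] : m + 2 ≤ (m + 1) * p)
        (pow_mul I (m + 1) p ▸ Ideal.pow_mem_pow ih p)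
    have hpy : (p : S) * 1 * y * r ∈ I ^ (m + 2) :=
      Ideal.mul_mem_right _ _ (by rw [pow_succ' I]; exact Ideal.mul_mem_mul (by simpa) ih)
    have hstep : (1 + x) ^ p ^ (m + 1) = (1 + y) ^ p := by
      rw [pow_succ, pow_mul, add_sub_cancel]
    rw [hstep, hr, show (1 : S) ^ p + y ^ p + p * 1 * y * r - 1 = y ^ p + p * 1 * y * r by ring]
    exact Ideal.add_mem _ hyp hpy

open Polynomial in
theorem exists_pow_prime_pow_eq_one_of_isNilpotent_sub_one {R : Type*} [Ring R] {p : ℕ}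
    (hp : p.Prime) {u : R} (hp_nil : IsNilpotent (p : R)) (hu : IsNilpotent (u - 1)) :
    ∃ m : ℕ, u ^ p ^ m = 1 := by
  let θ : ℤ[X] →ₐ[ℤ] R := aeval (u - 1)
  let I : Ideal ℤ[X] := Ideal.span {(p : ℤ[X]), X}
  have hI : I ≤ (RingHom.ker θ).radical := by
    rw [Ideal.span_le, Set.insert_subset_iff, Set.singleton_subset_iff]
    obtain ⟨a, ha⟩ := hp_nil
    obtain ⟨b, hb⟩ := hu
    exact ⟨⟨a, by simp [θ, ha]⟩, ⟨b, by simp [θ, hb]⟩⟩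
  obtain ⟨m, hm⟩ := Ideal.exists_pow_le_of_le_radical_of_fg hI ⟨{(p : ℤ[X]), X}, by simp [I]⟩
  have hmem := Ideal.one_add_pow_prime_pow_sub_one_mem_pow hp (I := I) (x := X)
    (Ideal.subset_span (by simp)) (Ideal.subset_span (by simp)) m
  refine ⟨m, ?_⟩
  simpa [θ, sub_eq_zero] using hm (Ideal.pow_le_pow_right m.le_succ hmem)

theorem IsPGroup.semidirectProduct {p : ℕ} {N G : Type*} [Group N] [Group G]
    {φ : G →* MulAut N} (hN : IsPGroup p N) (hG : IsPGroup p G) : IsPGroup p (N ⋊[φ] G) := by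
  intro g
  obtain ⟨k, hk⟩ := hG g.right
  have hright : (g ^ p ^ k).right = 1 := by
    rw [← SemidirectProduct.rightHom_eq_right, map_pow, SemidirectProduct.rightHom_eq_right, hk]
  obtain ⟨j, hj⟩ := hN (g ^ p ^ k).left
  refine ⟨k + j, ?_⟩
  rw [pow_add, pow_mul, ← SemidirectProduct.inl_left_mul_inr_right (g ^ p ^ k), hright,
    map_one, mul_one, ← map_pow, hj, map_one]

theorem IsPGroup.zpowers_of_pow_eq_one {p : ℕ} {G : Type*} [Group G] {g : G} {m : ℕ}
    (hg : g ^ p ^ m = 1) : IsPGroup p (Subgroup.zpowers g) :=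
  IsPGroup.of_card_dvd_pow (by rw [Nat.card_zpowers]; exact orderOf_dvd_of_pow_eq_one hg)

theorem isPGroup_multiplicative_pi_zmod_pow (p k : ℕ) (ι : Type*) :
    IsPGroup p (Multiplicative (ι → ZMod (p ^ k))) := fun g =>
  ⟨k, by rw [← toAdd_eq_zero, toAdd_pow]; ext i; simp⟩

theorem Function.Semiconj.mulAut_zpow {N N' : Type*} [Mul N] [Mul N'] {f : N → N'}
    {α : MulAut N} {β : MulAut N'} (h : Function.Semiconj f α β) (n : ℤ) :
    Function.Semiconj f ⇑(α ^ n) ⇑(β ^ n) := by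
  induction n using Int.induction_on with
  | zero => exact fun _ => rfl
  | succ n ih =>
    intro x
    rw [zpow_add_one, zpow_add_one, MulAut.mul_apply, MulAut.mul_apply, ih, h]
  | pred n ih =>
    intro x
    have hinv : f (α⁻¹ x) = β⁻¹ (f x) := by
      rw [← MulAut.inv_apply_self N' β (f (α⁻¹ x)), ← h, MulAut.apply_inv_self]
    rw [zpow_sub_one, zpow_sub_one, MulAut.mul_apply, MulAut.mul_apply, ih, hinv]

theorem exists_intCast_zmod_pow_ne_zero {p : ℕ} (hp : 1 < p) {z : ℤ} (hz : z ≠ 0) :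
    ∃ k : ℕ, (z : ZMod (p ^ k)) ≠ 0 := by
  obtain ⟨k, hk⟩ :=
    (Int.finiteMultiplicity_iff (a := p)).mpr ⟨by rw [Int.natAbs_natCast]; omega, hz⟩
  exact ⟨k + 1, by rwa [Ne, ZMod.intCast_zmod_eq_zero_iff_dvd, Nat.cast_pow]⟩

theorem residuallyP_multiplicative_int {p : ℕ} (hp : 1 < p) :
    ResiduallyP p (Multiplicative ℤ) := by
  intro z hz
  obtain ⟨k, hk⟩ := exists_intCast_zmod_pow_ne_zero hp fun h => hz (toAdd_eq_zero.mp h)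
  have : NeZero (p ^ k) := ⟨pow_ne_zero k (by omega)⟩
  exact ⟨Multiplicative (ZMod (p ^ k)), _, inferInstance, (Int.castAddHom _).toMultiplicative,
    .of_card (n := k) (by rw [Nat.card_congr Multiplicative.toAdd, Nat.card_zmod]),
    fun h => hk (congrArg Multiplicative.toAdd h)⟩

theorem residuallyP_semidirectProduct_zpowersHom {p : ℕ} (hp : 1 < p) {N : Type*} [Group N]
    (α : MulAut N)
    (h : ∀ x : N, x ≠ 1 → ∃ (N' : Type) (_ : Group N') (_ : Finite N') (f : N →* N')
      (β : MulAut N') (m : ℕ), IsPGroup p N' ∧ β ^ p ^ m = 1 ∧ Function.Semiconj f α β ∧ f x ≠ 1) :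
    ResiduallyP p (N ⋊[zpowersHom _ α] Multiplicative ℤ) := by
  intro g hg
  by_cases hleft : g.left = 1
  · obtain ⟨P, _, _, f, hP, hf⟩ :=
      residuallyP_multiplicative_int hp g.right fun h => hg (SemidirectProduct.ext hleft h)
    exact ⟨P, _, inferInstance, f.comp SemidirectProduct.rightHom, hP, hf⟩
  · obtain ⟨N', _, _, f, β, m, hN', hβ, hf, hx⟩ := h _ hleft
    let F := SemidirectProduct.map (φ₁ := zpowersHom _ α) (φ₂ := (Subgroup.zpowers β).subtype) f
      (zpowersHom _ ⟨β, Subgroup.mem_zpowers β⟩) fun n => by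
        ext x
        exact hf.mulAut_zpow n.toAdd x
    exact ⟨_, _, Finite.of_equiv _ SemidirectProduct.equivProd.symm, F,
      hN'.semidirectProduct (.zpowers_of_pow_eq_one hβ), fun h1 => hx (congrArg (·.left) h1)⟩

namespace Matrix

variable {n : Type*} [Fintype n] [DecidableEq n]

def mulVecMulAut {R : Type*} [Ring R] : (Matrix n n R)ˣ →* MulAut (Multiplicative (n → R)) where
  toFun U := AddEquiv.toMultiplicative
    { toFun := (U : Matrix n n R).mulVec
      invFun := (↑U⁻¹ : Matrix n n R).mulVec
      left_inv v := by simp [mulVec_mulVec]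
      right_inv v := by simp [mulVec_mulVec]
      map_add' := mulVec_add _ }
  map_one' := by ext; simp
  map_mul' U V := by ext; simp [mulVec_mulVec]

theorem mulVecMulAut_apply {R : Type*} [Ring R] (U : (Matrix n n R)ˣ)
    (v : Multiplicative (n → R)) :
    mulVecMulAut U v = Multiplicative.ofAdd ((U : Matrix n n R) *ᵥ v.toAdd) :=
  rfl

theorem isNilpotent_map_intCast_of_map_intCast_eq_zero {p : ℕ} {D : Matrix n n ℤ}
    (hD : D.map (Int.cast : ℤ → ZMod p) = 0) (k : ℕ) :
    IsNilpotent (D.map (Int.cast : ℤ → ZMod (p ^ k))) := by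
  have hdvd i j : (p : ℤ) ∣ D i j := (ZMod.intCast_zmod_eq_zero_iff_dvd _ _).mp (congrFun₂ hD i j)
  have hsmul : D.map (Int.cast : ℤ → ZMod (p ^ k)) =
      (p : ZMod (p ^ k)) • (of fun i j => D i j / p).map Int.cast := by
    ext i j
    rw [map_apply, smul_apply, map_apply, of_apply, smul_eq_mul]
    conv_lhs => rw [← Int.mul_ediv_cancel' (hdvd i j)]
    push_cast
    rfl
  exact ⟨k, by rw [hsmul, smul_pow, ← Nat.cast_pow, ZMod.natCast_self, zero_smul]⟩

theorem isNilpotent_natCast_zmod_pow (p k : ℕ) : IsNilpotent (p : Matrix n n (ZMod (p ^ k))) :=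
  ⟨k, by rw [← Nat.cast_pow, ← map_natCast (algebraMap (ZMod (p ^ k)) _), ZMod.natCast_self,
    map_zero]⟩

theorem exists_unit_eq_map_intCast_pow_eq_one {p : ℕ} (hp : p.Prime) {M : Matrix n n ℤ}
    (hM : IsNilpotent (M.map (Int.cast : ℤ → ZMod p) - 1)) (k : ℕ) :
    ∃ (U : (Matrix n n (ZMod (p ^ k)))ˣ) (m : ℕ),
      (U : Matrix n n (ZMod (p ^ k))) = M.map Int.cast ∧ U ^ p ^ m = 1 := by
  have hcast (q e : ℕ) :
      ((M - 1) ^ e).map (Int.cast : ℤ → ZMod q) = (M.map Int.cast - 1) ^ e := by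
    have := map_pow (Int.castRingHom (ZMod q)).mapMatrix (M - 1) e
    rwa [map_sub, map_one] at this
  obtain ⟨e, he⟩ := hM
  have hunip : IsNilpotent (M.map (Int.cast : ℤ → ZMod (p ^ k)) - 1) :=
    IsNilpotent.of_pow (m := e) <| hcast _ e ▸
      isNilpotent_map_intCast_of_map_intCast_eq_zero (by rw [hcast, he]) k
  obtain ⟨m, hm⟩ := exists_pow_prime_pow_eq_one_of_isNilpotent_sub_one hp
    (isNilpotent_natCast_zmod_pow p k) hunip
  exact ⟨Units.ofPowEqOne _ _ hm (pow_ne_zero _ hp.ne_zero), m, rfl, Units.pow_ofPowEqOne _ _⟩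

end Matrix

namespace LinearMap

variable {n : Type*} [Fintype n] [DecidableEq n]

theorem intCast_apply_eq_mulVec (q : ℕ) {m : Type*} (φ : (n → ℤ) →ₗ[ℤ] (m → ℤ))
    (v : n → ℤ) :
    (fun i => (φ v i : ZMod q)) =
      ((toMatrix' φ).map Int.cast).mulVec fun i => (v i : ZMod q) := by
  rw [← toMatrix'_mulVec φ v]
  exact funext (RingHom.map_mulVec (Int.castRingHom (ZMod q)) _ v)

theorem toMatrixAlgEquiv'_eq_map_intCast {p : ℕ}
    (φ : (n → ℤ) →ₗ[ℤ] (n → ℤ)) (ψ : (n → ZMod p) →ₗ[ZMod p] (n → ZMod p))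
    (hcomm : ∀ x : n → ℤ, ψ (fun i => (x i : ZMod p)) = fun i => (φ x i : ZMod p)) :
    toMatrixAlgEquiv' ψ = (toMatrix' φ).map Int.cast := by
  ext i j
  have hsingle : (fun l => ((Pi.single j 1 : n → ℤ) l : ZMod p)) = Pi.single j 1 := by
    ext l; rcases eq_or_ne l j with rfl | h <;> simp [*]
  simpa [toMatrixAlgEquiv'_apply, toMatrix'_apply, hsingle] using
    congrFun (hcomm (Pi.single j 1)) i

end LinearMap

theorem residually_p_of_reduction_unipotent (p d : ℕ) [Fact p.Prime]
    (φ : (Fin d → ℤ) ≃ₗ[ℤ] (Fin d → ℤ))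
    (ψ : (Fin d → ZMod p) ≃ₗ[ZMod p] (Fin d → ZMod p))
    (hcomm : ∀ x : Fin d → ℤ, ψ (fun i => (x i : ZMod p)) = fun i => ((φ x i : ℤ) : ZMod p))
    (huni : (ψ.toLinearMap - 1) ^ d = 0) :
    ResiduallyP p (MapTorus d φ) := by
  have hp : p.Prime := Fact.out
  set M := LinearMap.toMatrix' φ.toLinearMap
  have hM : IsNilpotent (M.map (Int.cast : ℤ → ZMod p) - 1) := by
    rw [← LinearMap.toMatrixAlgEquiv'_eq_map_intCast _ _ hcomm,
      ← map_one LinearMap.toMatrixAlgEquiv', ← map_sub]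
    exact ⟨d, by rw [← map_pow, huni, map_zero]⟩
  refine residuallyP_semidirectProduct_zpowersHom hp.one_lt _ fun x hx => ?_
  obtain ⟨i, hi⟩ := Function.ne_iff.mp fun h => hx (toAdd_eq_zero.mp h)
  obtain ⟨k, hk⟩ := exists_intCast_zmod_pow_ne_zero hp.one_lt hi
  obtain ⟨U, m, hU, hUm⟩ := Matrix.exists_unit_eq_map_intCast_pow_eq_one hp hM k
  have : NeZero (p ^ k) := ⟨pow_ne_zero k hp.ne_zero⟩
  refine ⟨_, _, inferInstance, ((Int.castAddHom (ZMod (p ^ k))).compLeft (Fin d)).toMultiplicative,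
    Matrix.mulVecMulAut U, m, isPGroup_multiplicative_pi_zmod_pow p k (Fin d),
    by rw [← map_pow, hUm, map_one], fun y => ?_,
    fun h => hk (congrFun (congrArg Multiplicative.toAdd h) i)⟩
  rw [Matrix.mulVecMulAut_apply, hU]
  exact congrArg Multiplicative.ofAdd (φ.toLinearMap.intCast_apply_eq_mulVec _ y.toAdd)
end
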